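/- Let M = (S, A, P, R, H, μ) be a finite MDP and π a (possibly non-stationary) deterministic policy, and let T = ((s_0, a_0, r_0), …, (s_{H−1}, a_{H−1}, r_{H−1}), s_H) be a random trajectory obtained by executing π in M. Then for any (s, a, s′) ∈ S × A × S and any δ ∈ (0,1], with probability at least 1 − δ, |Σ_{h=0}^{H−1} 1[(s_h, a_h, s_{h+1}) = (s, a, s′)] − P(s′ | s, a) · Σ_{h=0}^{H−1} 1[(s_h, a_h) = (s, a)]| ≤ √(((4·Q_{δ/2}(Σ_{h=0}^{H−1} 1[(s_h, a_h) = (s, a)]) + 8)/δ) · P(s′ | s, a)). -/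

import Mathlib

/-!
The deviation is the sum over steps of the martingale differences
`1[(s_k, a_k, s_{k+1}) = (s, a, s')] - P(s' | s, a) · 1[(s_k, a_k) = (s, a)]`.
Stop this martingale once `(s, a)` has been visited more than `Q = Q_{δ/2}(N)` times. Its
increments are orthogonal and each visit contributes conditional variance `P(1 - P) ≤ P`, so the
second moment of the stopped martingale is at most `P (Q + 1)`, and Chebyshev's inequality bounds
the probability that it exceeds `t = √((4Q + 8) P / δ)` by `δ / 4`. On the event `N ≤ Q` the
stopped and unstopped deviations agree, and `N > Q` has probability `< δ / 2` by the choice of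
the quantile.
-/

open Finset

/-- Extend a trajectory `(s_0, …, s_H)` to a function `ℕ → S` (constant after time `H`). -/
def extT {S : Type} (H : ℕ) (T : Fin (H + 1) → S) : ℕ → S :=
  fun n => T ⟨min n H, Nat.lt_succ_of_le (Nat.min_le_right n H)⟩

/-- Probability of the trajectory with state sequence `f` under the (possibly non-stationary)
deterministic policy `π`: `p(T, M, π) = μ(s_0) · ∏_{h<H} P(s_{h+1} ∣ s_h, π_h(s_h))`. -/
noncomputable def trajP {S A : Type} (μ : S → ℝ) (P : S → A → S → ℝ)
    (π : ℕ → S → A) (H : ℕ) (f : ℕ → S) : ℝ :=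
  μ (f 0) * ∏ h ∈ Finset.range H, P (f h) (π h (f h)) (f (h + 1))

/-- Number of times the state-action pair `z` is visited during the first `K` steps of the
trajectory with state sequence `f`, when actions are chosen by the policy `π`. -/
def nVisits {S A : Type} [DecidableEq S] [DecidableEq A] (π : ℕ → S → A) (K : ℕ)
    (z : S × A) (f : ℕ → S) : ℕ :=
  ∑ h ∈ Finset.range K, if (f h, π h (f h)) = z then 1 else 0

/-- Number of times the state-action-state triple `z` is visited during the first `K` steps. -/
def nVisits3 {S A : Type} [DecidableEq S] [DecidableEq A] (π : ℕ → S → A) (K : ℕ)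
    (z : S × A × S) (f : ℕ → S) : ℕ :=
  ∑ h ∈ Finset.range K, if (f h, π h (f h), f (h + 1)) = z then 1 else 0

/-- The `d`-quantile `Q_d(X) = sup {x ∣ Pr[X ≥ x] ≥ d}` of the random variable `X` of the random
trajectory induced by executing the policy `π` in the `H`-horizon MDP `(μ, P)`. -/
noncomputable def quantNS {S A : Type} [Fintype S] (μ : S → ℝ) (P : S → A → S → ℝ)
    (π : ℕ → S → A) (H : ℕ) (X : (ℕ → S) → ℝ) (d : ℝ) : ℝ :=
  sSup {x : ℝ | d ≤ ∑ T : Fin (H + 1) → S,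
    if x ≤ X (extT H T) then trajP μ P π H (extT H T) else 0}

section Weights

variable {ι : Type*} [Fintype ι] {w : ι → ℝ}

def weightOf (w : ι → ℝ) (p : ι → Prop) [DecidablePred p] : ℝ :=
  ∑ i, if p i then w i else 0

theorem weightOf_mono (hw0 : ∀ i, 0 ≤ w i) {p q : ι → Prop} [DecidablePred p]
    [DecidablePred q] (h : ∀ i, p i → q i) : weightOf w p ≤ weightOf w q :=
  Finset.sum_le_sum fun i _ => by
    by_cases hp : p i
    · simp [hp, h i hp]
    · simp only [hp, if_false]; split <;> simp [hw0 i]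

theorem sum_le_weightOf_add_add_of_forall_or (hw0 : ∀ i, 0 ≤ w i) {p q r : ι → Prop}
    [DecidablePred p] [DecidablePred q] [DecidablePred r] (h : ∀ i, p i ∨ q i ∨ r i) :
    ∑ i, w i ≤ weightOf w p + weightOf w q + weightOf w r := by
  simp only [weightOf, ← Finset.sum_add_distrib]
  refine Finset.sum_le_sum fun i _ => ?_
  rcases h i with hi | hi | hi <;> simp only [hi, if_true] <;> split_ifs <;> linarith [hw0 i]

theorem weightOf_lt_abs_le (hw0 : ∀ i, 0 ≤ w i) (X : ι → ℝ) {t ε : ℝ} (ht : 0 ≤ t)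
    (hε : 0 ≤ ε) (hX : ∑ i, w i * X i ^ 2 ≤ ε * t ^ 2) :
    weightOf w (fun i => t < |X i|) ≤ ε := by
  rcases ht.eq_or_lt with rfl | ht
  · have hzero : ∀ i, w i * X i ^ 2 = 0 := fun i =>
      (Finset.sum_eq_zero_iff_of_nonneg fun j _ => mul_nonneg (hw0 j) (sq_nonneg _)).1
        (le_antisymm (by simpa using hX) (Finset.sum_nonneg fun j _ =>
          mul_nonneg (hw0 j) (sq_nonneg _))) i (Finset.mem_univ i)
    refine le_of_eq_of_le (Finset.sum_eq_zero fun i _ => ?_) hε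
    split_ifs with hi
    · simpa [(abs_pos.1 hi)] using hzero i
    · rfl
  · refine le_of_mul_le_mul_right (le_trans ?_ hX) (pow_pos ht 2)
    rw [weightOf, Finset.sum_mul]
    refine Finset.sum_le_sum fun i _ => ?_
    split_ifs with hi
    · rw [← sq_abs (X i)]
      exact mul_le_mul_of_nonneg_left (pow_le_pow_left₀ ht.le hi.le 2) (hw0 i)
    · simpa using mul_nonneg (hw0 i) (sq_nonneg (X i))

noncomputable def upperQuantile (w : ι → ℝ) (X : ι → ℝ) (d : ℝ) : ℝ :=
  sSup {x : ℝ | d ≤ weightOf w (fun i => x ≤ X i)}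

theorem bddAbove_upperQuantile_set (X : ι → ℝ) {d : ℝ} (hd : 0 < d) :
    BddAbove {x : ℝ | d ≤ weightOf w (fun i => x ≤ X i)} := by
  obtain ⟨B, hB⟩ := (Set.finite_range X).bddAbove
  refine ⟨B, fun x hx => not_lt.1 fun hBx => ?_⟩
  have hzero : weightOf w (fun i => x ≤ X i) = 0 :=
    Finset.sum_eq_zero fun i _ => if_neg (not_le.2 ((hB ⟨i, rfl⟩).trans_lt hBx))
  exact (hd.trans_le hx).ne' hzero

theorem upperQuantile_nonneg (hw1 : ∑ i, w i = 1) (X : ι → ℕ) {d : ℝ} (hd0 : 0 < d)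
    (hd1 : d ≤ 1) : 0 ≤ upperQuantile w (fun i => (X i : ℝ)) d := by
  refine le_csSup (bddAbove_upperQuantile_set _ hd0) ?_
  simpa [weightOf, hw1] using hd1

theorem weightOf_upperQuantile_lt (hw0 : ∀ i, 0 ≤ w i) (X : ι → ℕ) {d : ℝ} (hd : 0 < d) :
    weightOf w (fun i => upperQuantile w (fun i => (X i : ℝ)) d < X i) < d := by
  set Q := upperQuantile w (fun i => (X i : ℝ)) d
  -- `⌊Q⌋ + 1` lies above the quantile, and an integer exceeds `Q` iff it is `≥ ⌊Q⌋ + 1`.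
  have hnot : ¬ d ≤ weightOf w (fun i => ((⌊Q⌋ + 1 : ℤ) : ℝ) ≤ X i) := fun h =>
    (Int.lt_floor_add_one Q).not_ge (by exact_mod_cast le_csSup (bddAbove_upperQuantile_set _ hd) h)
  refine (weightOf_mono hw0 fun i hi => ?_).trans_lt (not_le.1 hnot)
  have : ⌊Q⌋ < (X i : ℤ) := Int.floor_lt.2 (by exact_mod_cast hi)
  exact_mod_cast Int.add_one_le_of_lt this

end Weights

theorem DependsOn.mul {ι : Type*} {α : ι → Type*} {R : Type*} [Mul R]
    {f g : (Π i, α i) → R} {s : Set ι} (hf : DependsOn f s) (hg : DependsOn g s) :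
    DependsOn (f * g) s :=
  fun _ _ h => congrArg₂ (· * ·) (hf h) (hg h)

theorem dependsOn_finset_sum {ι κ : Type*} {α : ι → Type*} {R : Type*} [AddCommMonoid R]
    {t : Finset κ} {f : κ → (Π i, α i) → R} {s : Set ι}
    (hf : ∀ k ∈ t, DependsOn (f k) s) :
    DependsOn (∑ k ∈ t, f k) s :=
  fun _ _ h => by simp only [Finset.sum_apply]; exact Finset.sum_congr rfl fun k hk => hf k hk h

section Trajectory

variable {S A : Type}

theorem extT_of_le {m n : ℕ} (T : Fin (m + 1) → S) (hn : n ≤ m) :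
    extT m T n = T ⟨n, Nat.lt_succ_of_le hn⟩ := by
  simp only [extT, Nat.min_eq_left hn]

theorem extT_snoc_of_le {m n : ℕ} (T : Fin (m + 1) → S) (x : S) (hn : n ≤ m) :
    extT (m + 1) (Fin.snoc T x) n = extT m T n := by
  rw [extT_of_le _ (hn.trans m.le_succ), extT_of_le T hn]
  exact Fin.snoc_castSucc (α := fun _ => S) x T ⟨n, Nat.lt_succ_of_le hn⟩

theorem extT_snoc_self {m : ℕ} (T : Fin (m + 1) → S) (x : S) :
    extT (m + 1) (Fin.snoc T x) (m + 1) = x := by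
  rw [extT_of_le _ le_rfl]
  exact Fin.snoc_last (α := fun _ => S) x T

variable (μ : S → ℝ) (P : S → A → S → ℝ) (π : ℕ → S → A)

theorem trajP_nonneg (hμ0 : ∀ s, 0 ≤ μ s) (hP0 : ∀ s a s', 0 ≤ P s a s') (m : ℕ)
    (f : ℕ → S) :
    0 ≤ trajP μ P π m f :=
  mul_nonneg (hμ0 _) (Finset.prod_nonneg fun _ _ => hP0 _ _ _)

theorem trajP_dependsOn (m : ℕ) : DependsOn (trajP μ P π m) (Set.Iic m) := by
  intro f g hfg
  simp only [trajP, hfg 0 (Nat.zero_le m)]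
  refine congrArg _ (Finset.prod_congr rfl fun h hh => ?_)
  have hh : h < m := Finset.mem_range.1 hh
  rw [hfg h hh.le, hfg (h + 1) hh]

theorem trajP_succ (m : ℕ) (f : ℕ → S) :
    trajP μ P π (m + 1) f = trajP μ P π m f * P (f m) (π m (f m)) (f (m + 1)) := by
  simp only [trajP, Finset.prod_range_succ, mul_assoc]

variable [Fintype S]

noncomputable def trajExp (m : ℕ) : ((ℕ → S) → ℝ) →ₗ[ℝ] ℝ :=
  ∑ T : Fin (m + 1) → S, trajP μ P π m (extT m T) • LinearMap.proj (extT m T)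

theorem trajExp_apply (m : ℕ) (X : (ℕ → S) → ℝ) :
    trajExp μ P π m X = ∑ T : Fin (m + 1) → S, trajP μ P π m (extT m T) * X (extT m T) := by
  simp [trajExp]

theorem trajExp_mono (hμ0 : ∀ s, 0 ≤ μ s) (hP0 : ∀ s a s', 0 ≤ P s a s') (m : ℕ)
    {X Y : (ℕ → S) → ℝ} (h : X ≤ Y) : trajExp μ P π m X ≤ trajExp μ P π m Y := by
  simp only [trajExp_apply]
  exact Finset.sum_le_sum fun T _ =>
    mul_le_mul_of_nonneg_left (h _) (trajP_nonneg μ P π hμ0 hP0 m _)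

theorem trajExp_succ (m : ℕ) (X : (ℕ → S) → ℝ) :
    trajExp μ P π (m + 1) X = ∑ T : Fin (m + 1) → S, ∑ x : S,
      trajP μ P π m (extT m T) * P (extT m T m) (π m (extT m T m)) x *
        X (extT (m + 1) (Fin.snoc T x)) := by
  rw [trajExp_apply, ← (Fin.snocEquiv fun _ => S).sum_comp, Fintype.sum_prod_type,
    Finset.sum_comm]
  refine Finset.sum_congr rfl fun T _ => Finset.sum_congr rfl fun x _ => ?_
  have hpre : trajP μ P π m (extT (m + 1) (Fin.snoc T x)) = trajP μ P π m (extT m T) :=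
    trajP_dependsOn μ P π m fun i hi => extT_snoc_of_le T x hi
  rw [show (Fin.snocEquiv fun _ => S) (x, T) = Fin.snoc T x from rfl, trajP_succ, hpre,
    extT_snoc_of_le T x le_rfl, extT_snoc_self]

variable {μ P π}

theorem trajExp_succ_of_dependsOn (hP1 : ∀ s a, ∑ s', P s a s' = 1) {m : ℕ}
    {X : (ℕ → S) → ℝ} (hX : DependsOn X (Set.Iic m)) :
    trajExp μ P π (m + 1) X = trajExp μ P π m X := by
  rw [trajExp_succ, trajExp_apply]
  refine Finset.sum_congr rfl fun T _ => ?_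
  have hXT : ∀ x, X (extT (m + 1) (Fin.snoc T x)) = X (extT m T) := fun x =>
    hX fun i hi => extT_snoc_of_le T x hi
  simp only [hXT, ← Finset.sum_mul, ← Finset.mul_sum, hP1, mul_one]

theorem trajExp_of_dependsOn (hP1 : ∀ s a, ∑ s', P s a s' = 1) {m M : ℕ} (hm : m ≤ M)
    {X : (ℕ → S) → ℝ} (hX : DependsOn X (Set.Iic m)) :
    trajExp μ P π M X = trajExp μ P π m X := by
  induction M, hm using Nat.le_induction with
  | base => rfl
  | succ M hM ih =>
    rw [trajExp_succ_of_dependsOn hP1 (hX.mono (Set.Iic_subset_Iic.2 hM)), ih]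

theorem trajExp_const (hμ1 : ∑ s, μ s = 1) (hP1 : ∀ s a, ∑ s', P s a s' = 1) (M : ℕ)
    (c : ℝ) :
    trajExp μ P π M (fun _ => c) = c := by
  rw [trajExp_of_dependsOn hP1 (Nat.zero_le M) fun _ _ _ => rfl, trajExp_apply,
    ← (Equiv.funUnique (Fin 1) S).symm.sum_comp]
  simp [trajP, extT, ← Finset.sum_mul, hμ1]

theorem sum_trajP_extT (hμ1 : ∑ s, μ s = 1) (hP1 : ∀ s a, ∑ s', P s a s' = 1) (M : ℕ) :
    ∑ T : Fin (M + 1) → S, trajP μ P π M (extT M T) = 1 := by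
  simpa [trajExp_apply] using trajExp_const (π := π) hμ1 hP1 M 1

/-- Markov property at step `k`. -/
theorem trajExp_mul_next (hP1 : ∀ s a, ∑ s', P s a s' = 1) {k M : ℕ} (hk : k < M)
    {G : (ℕ → S) → ℝ} (hG : DependsOn G (Set.Iic k)) (φ : S → S → ℝ) :
    trajExp μ P π M (G * fun f => φ (f k) (f (k + 1))) =
      trajExp μ P π M (G * fun f => ∑ x, P (f k) (π k (f k)) x * φ (f k) x) := by
  have hL : DependsOn (G * fun f => φ (f k) (f (k + 1))) (Set.Iic (k + 1)) :=
    (hG.mono (Set.Iic_subset_Iic.2 k.le_succ)).mul fun f g h => by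
      rw [h k (Set.mem_Iic.2 k.le_succ), h (k + 1) Set.self_mem_Iic]
  have hR : DependsOn (G * fun f => ∑ x, P (f k) (π k (f k)) x * φ (f k) x) (Set.Iic k) :=
    hG.mul fun f g h => by rw [h k Set.self_mem_Iic]
  rw [trajExp_of_dependsOn hP1 hk hL, trajExp_of_dependsOn hP1 hk.le hR, trajExp_succ,
    trajExp_apply]
  refine Finset.sum_congr rfl fun T _ => ?_
  have hGT : ∀ x, G (extT (k + 1) (Fin.snoc T x)) = G (extT k T) := fun x =>
    hG fun i hi => extT_snoc_of_le T x hi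
  simp only [Pi.mul_apply, hGT, extT_snoc_of_le T _ le_rfl, extT_snoc_self, Finset.mul_sum]
  exact Finset.sum_congr rfl fun x _ => by ring

theorem trajExp_sq_sum_eq_sum_trajExp_sq (M : ℕ)
    {Z : ℕ → (ℕ → S) → ℝ} (hZ : ∀ k, DependsOn (Z k) (Set.Iic (k + 1)))
    (horth : ∀ k < M, ∀ G, DependsOn G (Set.Iic k) → trajExp μ P π M (G * Z k) = 0) :
    trajExp μ P π M ((∑ k ∈ Finset.range M, Z k) ^ 2) =
      ∑ k ∈ Finset.range M, trajExp μ P π M (Z k ^ 2) := by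
  suffices ∀ n ≤ M, trajExp μ P π M ((∑ k ∈ Finset.range n, Z k) ^ 2) =
      ∑ k ∈ Finset.range n, trajExp μ P π M (Z k ^ 2) from this M le_rfl
  intro n hn
  induction n with
  | zero => simp
  | succ n ih =>
    have hS : DependsOn (2 * ∑ k ∈ Finset.range n, Z k) (Set.Iic n) :=
      DependsOn.mul (fun _ _ _ => rfl) (dependsOn_finset_sum fun k hk =>
        (hZ k).mono (Set.Iic_subset_Iic.2 (Finset.mem_range.1 hk)))
    rw [Finset.sum_range_succ, Finset.sum_range_succ, ← ih (Nat.le_of_succ_le hn),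
      show (∑ k ∈ Finset.range n, Z k + Z n) ^ 2 = (∑ k ∈ Finset.range n, Z k) ^ 2 +
        (2 * ∑ k ∈ Finset.range n, Z k) * Z n + Z n ^ 2 by ring,
      map_add, map_add, horth n hn _ hS, add_zero]

end Trajectory

section Visits

variable {S A : Type} [DecidableEq S] [DecidableEq A] (π : ℕ → S → A)

def visit (z : S × A) (k : ℕ) (f : ℕ → S) : ℝ :=
  if (f k, π k (f k)) = z then 1 else 0

def visit3 (z : S × A × S) (k : ℕ) (f : ℕ → S) : ℝ :=
  if (f k, π k (f k), f (k + 1)) = z then 1 else 0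

theorem nVisits_eq_sum_visit (K : ℕ) (z : S × A) (f : ℕ → S) :
    (nVisits π K z f : ℝ) = ∑ k ∈ Finset.range K, visit π z k f := by
  simp [nVisits, visit]

theorem nVisits3_eq_sum_visit3 (K : ℕ) (z : S × A × S) (f : ℕ → S) :
    (nVisits3 π K z f : ℝ) = ∑ k ∈ Finset.range K, visit3 π z k f := by
  simp [nVisits3, visit3]

theorem nVisits_dependsOn (K : ℕ) (z : S × A) :
    DependsOn (nVisits π K z) (Set.Iic K) := fun f g h =>
  Finset.sum_congr rfl fun k hk => by
    rw [h k (Set.mem_Iic.2 (Finset.mem_range.1 hk).le)]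

theorem nVisits_mono {k K : ℕ} (hk : k ≤ K) (z : S × A) (f : ℕ → S) :
    nVisits π k z f ≤ nVisits π K z f :=
  Finset.sum_le_sum_of_subset (Finset.range_subset_range.2 hk)

theorem visit_dependsOn (z : S × A) (k : ℕ) : DependsOn (visit π z k) (Set.Iic k) :=
  fun f g h => by rw [visit, visit, h k Set.self_mem_Iic]

theorem visit3_dependsOn (z : S × A × S) (k : ℕ) :
    DependsOn (visit3 π z k) (Set.Iic (k + 1)) := fun f g h => by
  rw [visit3, visit3, h k (Set.mem_Iic.2 k.le_succ), h (k + 1) Set.self_mem_Iic]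

theorem visit_mem_Icc (z : S × A) (k : ℕ) (f : ℕ → S) : visit π z k f ∈ Set.Icc 0 1 := by
  unfold visit; split_ifs <;> norm_num

noncomputable def notStopped (z : S × A) (Q : ℝ) (k : ℕ) (f : ℕ → S) : ℝ :=
  if (nVisits π k z f : ℝ) ≤ Q then 1 else 0

theorem notStopped_dependsOn (z : S × A) (Q : ℝ) (k : ℕ) :
    DependsOn (notStopped π z Q k) (Set.Iic k) := fun f g h => by
  rw [notStopped, notStopped, nVisits_dependsOn π k z h]

theorem notStopped_sq (z : S × A) (Q : ℝ) (k : ℕ) :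
    notStopped π z Q k ^ 2 = notStopped π z Q k := by
  funext f
  simp only [Pi.pow_apply, notStopped]
  split_ifs <;> norm_num

theorem notStopped_nonneg (z : S × A) (Q : ℝ) (k : ℕ) (f : ℕ → S) :
    0 ≤ notStopped π z Q k f := by
  unfold notStopped; split_ifs <;> norm_num

theorem sum_notStopped_mul_visit_le (z : S × A) {Q : ℝ} (hQ : 0 ≤ Q) (K : ℕ)
    (f : ℕ → S) :
    ∑ k ∈ Finset.range K, notStopped π z Q k f * visit π z k f ≤ Q + 1 := by
  suffices ∀ K,
      ∑ k ∈ Finset.range K, notStopped π z Q k f * visit π z k f ≤ nVisits π K z f ∧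
      ∑ k ∈ Finset.range K, notStopped π z Q k f * visit π z k f ≤ Q + 1 from (this K).2
  intro K
  induction K with
  | zero => simp [nVisits]; linarith
  | succ K ih =>
    rw [Finset.sum_range_succ, nVisits_eq_sum_visit, Finset.sum_range_succ,
      ← nVisits_eq_sum_visit]
    obtain ⟨hv0, hv1⟩ := visit_mem_Icc π z K f
    by_cases hK : (nVisits π K z f : ℝ) ≤ Q
    · rw [show notStopped π z Q K f = 1 from if_pos hK, one_mul]
      constructor <;> linarith [ih.1]
    · rw [show notStopped π z Q K f = 0 from if_neg hK, zero_mul, add_zero]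
      exact ⟨by linarith [ih.1], ih.2⟩

theorem sum_mul_ite_eq_mul_ite [Fintype S] {P : S → A → S → ℝ} (s u : S) (a b : A)
    (s' : S) :
    ∑ x, P u b x * (if (u, b, x) = (s, a, s') then 1 else 0) =
      P s a s' * if (u, b) = (s, a) then 1 else 0 := by
  by_cases h : (u, b) = (s, a)
  · obtain ⟨rfl, rfl⟩ := Prod.mk.inj h
    simp
  · simp only [h, if_false, mul_zero]
    exact Finset.sum_eq_zero fun x _ => by
      rw [if_neg fun hx => h (by simp_all), mul_zero]

end Visits

section Increments

variable {S A : Type} [DecidableEq S] [DecidableEq A] (P : S → A → S → ℝ)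
  (π : ℕ → S → A) (s : S) (a : A) (s' : S)

noncomputable def increment (k : ℕ) : (ℕ → S) → ℝ :=
  visit3 π (s, a, s') k - P s a s' • visit π (s, a) k

theorem increment_dependsOn (k : ℕ) :
    DependsOn (increment P π s a s' k) (Set.Iic (k + 1)) := fun f g h => by
  simp only [increment, Pi.sub_apply, Pi.smul_apply, visit3_dependsOn π _ k h,
    visit_dependsOn π _ k fun i hi => h i (Set.Iic_subset_Iic.2 k.le_succ hi)]

theorem increment_sq (k : ℕ) :
    increment P π s a s' k ^ 2 =
      (1 - 2 * P s a s') • visit3 π (s, a, s') k + P s a s' ^ 2 • visit π (s, a) k := by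
  funext f
  simp only [increment, visit3, visit, Pi.pow_apply, Pi.sub_apply, Pi.add_apply,
    Pi.smul_apply, smul_eq_mul]
  split_ifs with h3 h2 h2 <;>
    first | exact absurd (congrArg (fun t => (t.1, t.2.1)) h3) h2 | ring

theorem nVisits3_sub_mul_nVisits (K : ℕ) (f : ℕ → S) :
    (nVisits3 π K (s, a, s') f : ℝ) - P s a s' * nVisits π K (s, a) f =
      ∑ k ∈ Finset.range K, increment P π s a s' k f := by
  simp only [nVisits3_eq_sum_visit3, nVisits_eq_sum_visit, Finset.mul_sum,
    ← Finset.sum_sub_distrib, increment, Pi.sub_apply, Pi.smul_apply, smul_eq_mul]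

noncomputable def stoppedDeviation (Q : ℝ) (M : ℕ) : (ℕ → S) → ℝ :=
  ∑ k ∈ Finset.range M, notStopped π (s, a) Q k * increment P π s a s' k

theorem stoppedDeviation_apply_of_le {Q : ℝ} {M : ℕ} {f : ℕ → S}
    (h : (nVisits π M (s, a) f : ℝ) ≤ Q) :
    stoppedDeviation P π s a s' Q M f =
      (nVisits3 π M (s, a, s') f : ℝ) - P s a s' * nVisits π M (s, a) f := by
  rw [nVisits3_sub_mul_nVisits, stoppedDeviation, Finset.sum_apply]
  refine Finset.sum_congr rfl fun k hk => ?_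
  have hk : (nVisits π k (s, a) f : ℝ) ≤ nVisits π M (s, a) f := by
    exact_mod_cast nVisits_mono π (Finset.mem_range.1 hk).le (s, a) f
  rw [Pi.mul_apply, notStopped, if_pos (hk.trans h), one_mul]

end Increments

section Martingale

variable {S A : Type} [Fintype S] [DecidableEq S] [DecidableEq A]
  {μ : S → ℝ} {P : S → A → S → ℝ} {π : ℕ → S → A} (s : S) (a : A) (s' : S)

theorem trajExp_mul_visit3 (hP1 : ∀ s a, ∑ s', P s a s' = 1) {k M : ℕ} (hk : k < M)
    {G : (ℕ → S) → ℝ} (hG : DependsOn G (Set.Iic k)) :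
    trajExp μ P π M (G * visit3 π (s, a, s') k) =
      P s a s' * trajExp μ P π M (G * visit π (s, a) k) := by
  rw [← smul_eq_mul (P s a s'), ← map_smul]
  refine (trajExp_mul_next hP1 hk hG
    fun u x => if (u, π k u, x) = (s, a, s') then 1 else 0).trans (congrArg _ ?_)
  funext f
  simp only [Pi.mul_apply, Pi.smul_apply, smul_eq_mul, sum_mul_ite_eq_mul_ite, visit]
  ring

theorem trajExp_mul_increment (hP1 : ∀ s a, ∑ s', P s a s' = 1) {k M : ℕ} (hk : k < M)
    {G : (ℕ → S) → ℝ} (hG : DependsOn G (Set.Iic k)) :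
    trajExp μ P π M (G * increment P π s a s' k) = 0 := by
  rw [increment, mul_sub, mul_smul_comm, map_sub, map_smul, trajExp_mul_visit3 s a s' hP1 hk hG,
    smul_eq_mul, sub_self]

theorem trajExp_mul_increment_sq (hP1 : ∀ s a, ∑ s', P s a s' = 1) {k M : ℕ} (hk : k < M)
    {G : (ℕ → S) → ℝ} (hG : DependsOn G (Set.Iic k)) :
    trajExp μ P π M (G * increment P π s a s' k ^ 2) =
      P s a s' * (1 - P s a s') * trajExp μ P π M (G * visit π (s, a) k) := by
  rw [increment_sq, mul_add, mul_smul_comm, mul_smul_comm, map_add, map_smul, map_smul,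
    trajExp_mul_visit3 s a s' hP1 hk hG, smul_eq_mul, smul_eq_mul]
  ring

theorem trajExp_stoppedDeviation_sq_le (hμ0 : ∀ s, 0 ≤ μ s) (hμ1 : ∑ s, μ s = 1)
    (hP0 : ∀ s a s', 0 ≤ P s a s') (hP1 : ∀ s a, ∑ s', P s a s' = 1) {Q : ℝ}
    (hQ : 0 ≤ Q) (M : ℕ) :
    trajExp μ P π M (stoppedDeviation P π s a s' Q M ^ 2) ≤ P s a s' * (Q + 1) := by
  set N := notStopped π (s, a) Q
  have hZ : ∀ k, DependsOn (N k * increment P π s a s' k) (Set.Iic (k + 1)) := fun k =>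
    ((notStopped_dependsOn π _ Q k).mono (Set.Iic_subset_Iic.2 k.le_succ)).mul
      (increment_dependsOn P π s a s' k)
  have horth : ∀ k < M, ∀ G, DependsOn G (Set.Iic k) →
      trajExp μ P π M (G * (N k * increment P π s a s' k)) = 0 := fun k hk G hG => by
    rw [← mul_assoc]
    exact trajExp_mul_increment s a s' hP1 hk (hG.mul (notStopped_dependsOn π _ Q k))
  have hdiag : ∀ k < M, trajExp μ P π M ((N k * increment P π s a s' k) ^ 2) =
      P s a s' * (1 - P s a s') * trajExp μ P π M (N k * visit π (s, a) k) := fun k hk => by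
    rw [mul_pow, notStopped_sq]
    exact trajExp_mul_increment_sq s a s' hP1 hk (notStopped_dependsOn π _ Q k)
  have hcount :
      trajExp μ P π M (∑ k ∈ Finset.range M, N k * visit π (s, a) k) ≤ Q + 1 := by
    refine (trajExp_mono μ P π hμ0 hP0 M (Y := fun _ => Q + 1) fun f => ?_).trans_eq
      (trajExp_const hμ1 hP1 M _)
    simpa only [Finset.sum_apply, Pi.mul_apply] using
      sum_notStopped_mul_visit_le π (s, a) hQ M f
  have hcount0 : 0 ≤ trajExp μ P π M (∑ k ∈ Finset.range M, N k * visit π (s, a) k) := by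
    refine (map_zero (trajExp μ P π M)).symm.le.trans
      (trajExp_mono μ P π hμ0 hP0 M fun f => ?_)
    simp only [Finset.sum_apply, Pi.mul_apply, Pi.zero_apply]
    exact Finset.sum_nonneg fun k _ =>
      mul_nonneg (notStopped_nonneg π _ Q k f) (visit_mem_Icc π _ k f).1
  calc trajExp μ P π M (stoppedDeviation P π s a s' Q M ^ 2)
      = ∑ k ∈ Finset.range M, trajExp μ P π M ((N k * increment P π s a s' k) ^ 2) :=
        trajExp_sq_sum_eq_sum_trajExp_sq M hZ horth
    _ = P s a s' * (1 - P s a s') *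
          trajExp μ P π M (∑ k ∈ Finset.range M, N k * visit π (s, a) k) := by
        rw [map_sum, Finset.mul_sum]
        exact Finset.sum_congr rfl fun k hk => hdiag k (Finset.mem_range.1 hk)
    _ ≤ P s a s' * (Q + 1) := by
        nlinarith [mul_le_mul_of_nonneg_left hcount (hP0 s a s'),
          mul_nonneg (mul_self_nonneg (P s a s')) hcount0]

theorem weightOf_lt_abs_stoppedDeviation_le (hμ0 : ∀ s, 0 ≤ μ s) (hμ1 : ∑ s, μ s = 1)
    (hP0 : ∀ s a s', 0 ≤ P s a s') (hP1 : ∀ s a, ∑ s', P s a s' = 1) {Q δ : ℝ}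
    (hQ : 0 ≤ Q) (hδ : 0 < δ) (M : ℕ) :
    weightOf (fun T : Fin (M + 1) → S => trajP μ P π M (extT M T))
      (fun T => √((4 * Q + 8) / δ * P s a s') <
        |stoppedDeviation P π s a s' Q M (extT M T)|) ≤ δ / 4 := by
  refine weightOf_lt_abs_le (fun T => trajP_nonneg μ P π hμ0 hP0 M _) _
    (Real.sqrt_nonneg _) (by positivity) ?_
  calc ∑ T, trajP μ P π M (extT M T) * stoppedDeviation P π s a s' Q M (extT M T) ^ 2
      = trajExp μ P π M (stoppedDeviation P π s a s' Q M ^ 2) := by simp [trajExp_apply]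
    _ ≤ P s a s' * (Q + 1) := trajExp_stoppedDeviation_sq_le s a s' hμ0 hμ1 hP0 hP1 hQ M
    _ ≤ δ / 4 * √((4 * Q + 8) / δ * P s a s') ^ 2 := by
      rw [Real.sq_sqrt (mul_nonneg (div_nonneg (by linarith) hδ.le) (hP0 s a s'))]
      field_simp
      nlinarith [hP0 s a s']

end Martingale

theorem stmt12 {S A : Type} [Fintype S] [DecidableEq S] [DecidableEq A]
    (μ : S → ℝ) (P : S → A → S → ℝ) (H : ℕ)
    (hμ0 : ∀ s, 0 ≤ μ s) (hμ1 : ∑ s, μ s = 1)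
    (hP0 : ∀ s a s', 0 ≤ P s a s') (hP1 : ∀ s a, ∑ s', P s a s' = 1)
    (π : ℕ → S → A) (s : S) (a : A) (s' : S)
    (δ : ℝ) (hδ0 : 0 < δ) (hδ1 : δ ≤ 1) :
    1 - δ ≤ ∑ T : Fin (H + 1) → S,
      if |(nVisits3 π H (s, a, s') (extT H T) : ℝ) -
            P s a s' * (nVisits π H (s, a) (extT H T) : ℝ)| ≤
          Real.sqrt
            ((4 * quantNS μ P π H (fun g => (nVisits π H (s, a) g : ℝ)) (δ / 2) + 8) / δ *
              P s a s') then
        trajP μ P π H (extT H T)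
      else 0 := by
  set w : (Fin (H + 1) → S) → ℝ := fun T => trajP μ P π H (extT H T)
  have hw0 : ∀ T, 0 ≤ w T := fun T => trajP_nonneg μ P π hμ0 hP0 H _
  have hw1 : ∑ T, w T = 1 := sum_trajP_extT hμ1 hP1 H
  set N : (Fin (H + 1) → S) → ℕ := fun T => nVisits π H (s, a) (extT H T)
  set Q := quantNS μ P π H (fun g => (nVisits π H (s, a) g : ℝ)) (δ / 2)
  have hQ : Q = upperQuantile w (fun T => (N T : ℝ)) (δ / 2) := rfl
  have hQ0 : 0 ≤ Q := hQ ▸ upperQuantile_nonneg hw1 N (by positivity) (by linarith)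
  have htail : weightOf w (fun T => Q < N T) < δ / 2 :=
    hQ ▸ weightOf_upperQuantile_lt hw0 N (by positivity)
  set t := √((4 * Q + 8) / δ * P s a s')
  have hdev : weightOf w (fun T => t < |stoppedDeviation P π s a s' Q H (extT H T)|) ≤ δ / 4 :=
    weightOf_lt_abs_stoppedDeviation_le s a s' hμ0 hμ1 hP0 hP1 hQ0 hδ0 H
  have hcover : ∀ T, |(nVisits3 π H (s, a, s') (extT H T) : ℝ) -
        P s a s' * (nVisits π H (s, a) (extT H T) : ℝ)| ≤ t ∨ Q < N T ∨
      t < |stoppedDeviation P π s a s' Q H (extT H T)| := by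
    intro T
    rcases lt_or_ge Q (N T) with hN | hN
    · exact Or.inr (Or.inl hN)
    · rw [← stoppedDeviation_apply_of_le P π s a s' hN]
      exact (le_or_gt _ _).imp_right Or.inr
  have hunion := sum_le_weightOf_add_add_of_forall_or hw0 hcover
  change 1 - δ ≤ weightOf w _
  linarith
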